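/- Let a ∈ A. For k, ℓ ∈ ℕ, the queue action z = [aᵏ āℓ] satisfies [ā] z = z [ā] if and only if k ≤ ℓ. Consequently, the set of w ∈ Σ* with [ā][w] = [w][ā] intersected with a*ā* equals { aᵏāℓ : k ≤ ℓ }, and hence the conjugator set C([ā],[ā]) = { z ∈ Q : [ā]z = z[ā] } is not a recognizable subset of Q. -/
import Mathlib


/-- A basic queue action: write a letter or read a letter. -/
inductive Act (A : Type) : Type
  | wr (a : A)
  | rd (a : A)
deriving DecidableEq

variable {A : Type} [DecidableEq A]

/-- The action of words over `Act A` on queue states `A* ∪ {⊥}` (⊥ = `none`). -/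
def act : Option (List A) → List (Act A) → Option (List A)
  | q, [] => q
  | none, _ :: _ => none
  | some q, (Act.wr a) :: u => act (some (q ++ [a])) u
  | some q, (Act.rd a) :: u =>
    match q with
    | [] => none
    | b :: q' => if b = a then act (some q') u else none

/-- Two words over `Act A` are equivalent if they act identically on all queues. -/
def qequiv (u v : List (Act A)) : Prop := ∀ q : List A, act (some q) u = act (some q) v

/-- Writing the word `w`. -/
def W (w : List A) : List (Act A) := w.map Act.wr

/-- Reading the word `w` (the barred copy of `w`). -/
def R (w : List A) : List (Act A) := w.map Act.rd

/-- `shuffle s` is the word `s₁ s̄₁ s₂ s̄₂ … sₖ s̄ₖ`. -/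
def shuffle (s : List A) : List (Act A) := s.flatMap fun a => [Act.wr a, Act.rd a]

/-- The projection to write letters. -/
def prW (w : List (Act A)) : List A :=
  w.filterMap fun x => match x with | Act.wr a => some a | Act.rd _ => none

/-- The projection to read letters (with the bars removed). -/
def prR (w : List (Act A)) : List A :=
  w.filterMap fun x => match x with | Act.wr _ => none | Act.rd a => some a

theorem act_append (u v : List (Act A)) : ∀ q, act q (u ++ v) = act (act q u) v := by
  induction u with
  | nil =>
      intro q
      cases q <;> rfl
  | cons x u ih =>
      intro q
      cases q with
      | none =>
          simp only [List.cons_append, act]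
          cases v with
          | nil => rfl
          | cons _ _ => rfl
      | some q =>
          cases x with
          | wr a => simpa [act] using ih _
          | rd a =>
              cases q with
              | nil =>
                  simp only [List.cons_append, act]
                  cases v with
                  | nil => rfl
                  | cons _ _ => rfl
              | cons b q' =>
                  by_cases h : b = a
                  · simp [List.cons_append, act, h, ih]
                  · simp only [List.cons_append, act, if_neg h]
                    cases v with
                    | nil => rfl
                    | cons _ _ => rfl

/-- The setoid of queue-action equivalence. -/
def qsetoid (A : Type) [DecidableEq A] : Setoid (List (Act A)) :=
  ⟨qequiv, ⟨fun _ _ => rfl, fun h q => (h q).symm, fun h1 h2 q => (h1 q).trans (h2 q)⟩⟩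

/-- The monoid of queue actions. -/
def QAct (A : Type) [DecidableEq A] : Type := Quotient (qsetoid A)

theorem act_none : ∀ v : List (Act A), act (none : Option (List A)) v = none
  | [] => rfl
  | _ :: _ => rfl

theorem qequiv_append {u u' v v' : List (Act A)} (hu : qequiv u u') (hv : qequiv v v') :
    qequiv (u ++ v) (u' ++ v') := by
  intro q
  rw [act_append, act_append, hu q]
  cases h : act (some q) u' with
  | none => rw [act_none, act_none]
  | some q' => exact hv q'

instance : Monoid (QAct A) where
  mul := Quotient.map₂ (· ++ ·) (fun _ _ hu _ _ hv => qequiv_append hu hv)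
  one := Quotient.mk (qsetoid A) []
  mul_assoc := by
    rintro ⟨u⟩ ⟨v⟩ ⟨w⟩
    exact congrArg (Quotient.mk (qsetoid A)) (List.append_assoc u v w)
  one_mul := by
    rintro ⟨u⟩
    rfl
  mul_one := by
    rintro ⟨u⟩
    exact congrArg (Quotient.mk (qsetoid A)) (List.append_nil u)

/-- The class of a word in the monoid of queue actions. -/
def cls (w : List (Act A)) : QAct A := Quotient.mk (qsetoid A) w

theorem cls_mul (u v : List (Act A)) : cls u * cls v = cls (u ++ v) := rfl

/-- A subset of the monoid of queue actions is recognizable if it is saturated by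
a morphism to a finite monoid. -/
def Recognizable (S : Set (QAct A)) : Prop :=
  ∃ (M : Type) (_ : Fintype M) (_ : Monoid M) (φ : QAct A →* M), φ ⁻¹' (φ '' S) = S

section Aux
variable {A : Type} [DecidableEq A]

theorem act_W (w : List A) : ∀ q : List A, act (some q) (W w) = some (q ++ w) := by
  induction w with
  | nil => intro q; simp [W, act]
  | cons b w ih =>
      intro q
      simpa [W, act] using ih (q ++ [b])

theorem act_R (v : List A) : ∀ q : List A,
    act (some q) (R v) = if v <+: q then some (q.drop v.length) else none := by
  induction v with
  | nil => intro q; simp [R, act]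
  | cons b v ih =>
      intro q
      simp only [R] at ih
      cases q with
      | nil =>
          simp [R, act]
      | cons c q' =>
          by_cases hc : c = b
          · subst hc
            simp [R, act, ih, List.cons_prefix_cons]
          · simp [R, act, hc, List.cons_prefix_cons, Ne.symm hc]

theorem act_rd (a : A) (q : List A) :
    act (some q) [Act.rd a] =
      match q with
      | [] => none
      | b :: t => if b = a then some t else none := by
  cases q with
  | nil => rfl
  | cons b t =>
      by_cases hb : b = a <;> simp [act, hb]

theorem key (a : A) (m : ℕ) : ∀ s : List A,
    (if List.replicate (m + 1) a <+: s then some (s.drop (m + 1)) else none) =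
      (if List.replicate m a <+: s then act (some (s.drop m)) [Act.rd a] else none) := by
  induction m with
  | zero =>
      intro s
      cases s with
      | nil => simp [act]
      | cons b t =>
          by_cases hb : b = a
          · simp [act_rd, hb, List.replicate_succ, List.cons_prefix_cons]
          · simp [act_rd, hb, List.replicate_succ, List.cons_prefix_cons, Ne.symm hb]
  | succ m ih =>
      intro s
      cases s with
      | nil =>
          simp [List.replicate_succ]
      | cons b t =>
          by_cases hb : b = a
          · subst hb
            simpa [List.replicate_succ, List.cons_prefix_cons] using ih t
          · simp [List.replicate_succ, List.cons_prefix_cons, Ne.symm hb]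

theorem rep_prefix (a : A) {l k : ℕ} :
    List.replicate l a <+: List.replicate k a ↔ l ≤ k := by
  constructor
  · intro h; simpa using h.length_le
  · intro h
    exact ⟨List.replicate (k - l) a, by
      rw [← List.replicate_add, Nat.add_sub_cancel' h]⟩

theorem drop_rep (a : A) : ∀ k l : ℕ, (List.replicate k a).drop l = List.replicate (k - l) a := by
  intro k
  induction k with
  | zero => intro l; simp
  | succ k ih =>
      intro l
      cases l with
      | zero => simp
      | succ l => simpa [List.replicate_succ, Nat.succ_sub_succ] using ih l

theorem part1 (a : A) (k l : ℕ) :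
    qequiv ([Act.rd a] ++ (W (List.replicate k a) ++ R (List.replicate l a)))
      ((W (List.replicate k a) ++ R (List.replicate l a)) ++ [Act.rd a]) ↔ k ≤ l := by
  constructor
  · intro h
    by_contra hk
    push_neg at hk
    have h0 := h []
    simp only [act_append] at h0
    rw [act_rd] at h0
    simp only [act_none] at h0
    rw [show act (some ([] : List A)) (W (List.replicate k a)) = some (List.replicate k a) by
        simpa using act_W (List.replicate k a) [], act_R, if_pos ((rep_prefix a).2 hk.le),
      drop_rep] at h0
    simp only [List.length_replicate] at h0
    have hkl : k - l = (k - l - 1) + 1 := by omega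
    rw [hkl, List.replicate_succ] at h0
    simp [act] at h0
  · intro hk q
    simp only [act_append]
    cases q with
    | nil =>
        rw [act_rd]
        simp only [act_none]
        rw [show act (some ([] : List A)) (W (List.replicate k a)) = some (List.replicate k a) by
            simpa using act_W (List.replicate k a) [], act_R]
        by_cases hp : List.replicate l a <+: List.replicate k a
        · have : l = k := le_antisymm ((rep_prefix a).1 hp) hk
          subst this
          rw [if_pos hp]
          simp [act, drop_rep]
        · rw [if_neg hp]
          exact (act_none _).symm
    | cons b q' =>
        by_cases hb : b = a
        · have hrd : act (some (b :: q')) [Act.rd a] = some q' := by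
            simp [act, hb]
          rw [hrd, act_W, act_W, act_R, act_R]
          simp only [List.cons_append]
          cases l with
          | zero =>
              have hk0 : k = 0 := Nat.le_zero.1 hk
              subst hk0
              simp [act, hb]
          | succ m =>
              have hpre : (List.replicate (m + 1) a <+: b :: (q' ++ List.replicate k a)) ↔
                  List.replicate m a <+: q' ++ List.replicate k a := by
                simp [List.replicate_succ, List.cons_prefix_cons, hb]
              simp only [List.length_replicate]
              rw [key a m (q' ++ List.replicate k a)]
              by_cases hp : List.replicate m a <+: q' ++ List.replicate k a
              · rw [if_pos hp, if_pos (hpre.2 hp)]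
                rfl
              · rw [if_neg hp, if_neg (fun hc => hp (hpre.1 hc))]
                exact (act_none _).symm
        · rw [act_rd]
          simp only [if_neg hb, act_none]
          rw [act_W, act_R]
          cases l with
          | zero =>
              have : k = 0 := Nat.le_zero.1 hk
              subst this
              simp [act, hb]
          | succ m =>
              rw [if_neg]
              · exact (act_none _).symm
              · rw [List.replicate_succ]
                intro hc
                rw [List.cons_append, List.cons_prefix_cons] at hc
                exact hb hc.1.symm

end Aux

/-- For `z = [aᵏ āˡ]` we have `[ā] z = z [ā]` iff `k ≤ ℓ`; consequently the words in
`a* ā*` commuting with `[ā]` are exactly `{aᵏ āˡ : k ≤ ℓ}` and the conjugator set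
`C([ā],[ā])` is not recognizable. -/
theorem stmt16 [Fintype A] [Nontrivial A] (a : A) :
    (∀ k ℓ : ℕ,
      cls [Act.rd a] * cls (W (List.replicate k a) ++ R (List.replicate ℓ a)) =
        cls (W (List.replicate k a) ++ R (List.replicate ℓ a)) * cls [Act.rd a] ↔ k ≤ ℓ) ∧
    ({ w : List (Act A) | cls [Act.rd a] * cls w = cls w * cls [Act.rd a] } ∩
      { w | ∃ k ℓ : ℕ, w = W (List.replicate k a) ++ R (List.replicate ℓ a) } =
      { w | ∃ k ℓ : ℕ, k ≤ ℓ ∧ w = W (List.replicate k a) ++ R (List.replicate ℓ a) }) ∧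
    ¬ Recognizable { z : QAct A | cls [Act.rd a] * z = z * cls [Act.rd a] } := by
  have hcls : ∀ k ℓ : ℕ,
      (cls [Act.rd a] * cls (W (List.replicate k a) ++ R (List.replicate ℓ a)) =
        cls (W (List.replicate k a) ++ R (List.replicate ℓ a)) * cls [Act.rd a]) ↔ k ≤ ℓ := by
    intro k ℓ
    rw [cls_mul, cls_mul]
    exact Iff.trans ⟨Quotient.exact, Quotient.sound⟩ (part1 a k ℓ)
  refine ⟨hcls, ?_, ?_⟩
  · ext w
    simp only [Set.mem_inter_iff, Set.mem_setOf_eq]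
    constructor
    · rintro ⟨hc, k, ℓ, rfl⟩
      exact ⟨k, ℓ, (hcls k ℓ).1 hc, rfl⟩
    · rintro ⟨k, ℓ, hkl, rfl⟩
      exact ⟨(hcls k ℓ).2 hkl, k, ℓ, rfl⟩
  · rintro ⟨M, fM, mM, φ, hφ⟩
    haveI := fM
    have main : ∀ k ℓ : ℕ, ℓ < k →
        φ (cls (W (List.replicate k a))) = φ (cls (W (List.replicate ℓ a))) → False := by
      intro k ℓ hlt heq
      have hmem : cls (W (List.replicate ℓ a) ++ R (List.replicate ℓ a)) ∈
          { z : QAct A | cls [Act.rd a] * z = z * cls [Act.rd a] } := (hcls ℓ ℓ).2 le_rfl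
      have hmem2 : cls (W (List.replicate k a) ++ R (List.replicate ℓ a)) ∈
          { z : QAct A | cls [Act.rd a] * z = z * cls [Act.rd a] } := by
        rw [← hφ]
        refine ⟨cls (W (List.replicate ℓ a) ++ R (List.replicate ℓ a)), hmem, ?_⟩
        rw [← cls_mul, ← cls_mul, map_mul, map_mul, heq]
      have := (hcls k ℓ).1 hmem2
      omega
    obtain ⟨k, ℓ, hne, heq⟩ :
        ∃ k ℓ : ℕ, k ≠ ℓ ∧
          φ (cls (W (List.replicate k a))) = φ (cls (W (List.replicate ℓ a))) :=
      Finite.exists_ne_map_eq_of_infinite _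
    rcases lt_or_gt_of_ne hne with h | h
    · exact main ℓ k h heq.symm
    · exact main k ℓ h heq
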